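/- For every t ∈ [0,1), the 2×2 operator matrix U_t := [[α_t, −t γ_t*], [γ_t, α_t*]] is a unitary operator on ℓ²(ℕ×ℤ) ⊕ ℓ²(ℕ×ℤ). -/

import Mathlib

/-- `ℓ²(ℕ×ℤ)`: the Hilbert space of square-summable complex families indexed by `ℕ × ℤ`. -/
noncomputable abbrev l2NZ : Type := lp (fun _ : ℕ × ℤ => ℂ) 2

/-- The standard orthonormal basis vectors `e_{n,k}` of `ℓ²(ℕ×ℤ)`. -/
noncomputable def eNZ (n : ℕ) (k : ℤ) : l2NZ := lp.single 2 (n, k) (1 : ℂ)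

/-- The Hilbert space direct sum `ℓ²(ℕ×ℤ) ⊕ ℓ²(ℕ×ℤ)`. -/
noncomputable abbrev H2 : Type := WithLp 2 (l2NZ × l2NZ)

/-- The element of `ℓ²(ℕ×ℤ) ⊕ ℓ²(ℕ×ℤ)` with components `x` and `y`. -/
noncomputable def pairH2 (x y : l2NZ) : H2 := (WithLp.equiv 2 (l2NZ × l2NZ)).symm (x, y)

/-- The defining property of the operators `α_t, γ_t` on `ℓ²(ℕ×ℤ)`:
`α_t e_{n,k} = √(1−t^{2n}) e_{n−1,k−1}` for `n ≥ 1`, `α_t e_{0,k} = 0`, and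
`γ_t e_{n,k} = tⁿ e_{n,k−1}` (with the convention `0⁰ = 1`, so at `t = 0` this reads
`α₀ e_{n,k} = e_{n−1,k−1}` for `n ≥ 1`, `α₀ e_{0,k} = 0`, `γ₀ e_{0,k} = e_{0,k−1}`,
`γ₀ e_{n,k} = 0` for `n ≥ 1`). -/
def IsAlphaGamma (t : ℝ) (α γ : l2NZ →L[ℂ] l2NZ) : Prop :=
  (∀ (n : ℕ) (k : ℤ),
    α (eNZ (n + 1) k) = (Real.sqrt (1 - t ^ (2 * (n + 1))) : ℂ) • eNZ n (k - 1)) ∧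
  (∀ k : ℤ, α (eNZ 0 k) = 0) ∧
  (∀ (n : ℕ) (k : ℤ), γ (eNZ n k) = ((t ^ n : ℝ) : ℂ) • eNZ n (k - 1))

/-!
`α_t` and `γ_t` are weighted shifts in the basis `e_{n,k}`, so every product of two of them or
their adjoints can be evaluated on basis vectors. This yields the relations of quantum `SU(2)`:
`α*α + γ*γ = 1`, `αα* + t²γ*γ = 1`, `γ` is normal, `αγ = tγα` and `αγ* = tγ*α`.
The adjoint of the block operator `U_t` is the transposed block matrix of adjoints, and each
entry of `U_t*U_t` and `U_tU_t*` reduces to one of these relations.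
-/

open ContinuousLinearMap WithLp
open scoped InnerProductSpace

section BlockOp

variable {𝕜 : Type*} [RCLike 𝕜] {E₁ E₂ F₁ F₂ G₁ G₂ : Type*}
  [NormedAddCommGroup E₁] [InnerProductSpace 𝕜 E₁] [NormedAddCommGroup E₂] [InnerProductSpace 𝕜 E₂]
  [NormedAddCommGroup F₁] [InnerProductSpace 𝕜 F₁] [NormedAddCommGroup F₂] [InnerProductSpace 𝕜 F₂]
  [NormedAddCommGroup G₁] [InnerProductSpace 𝕜 G₁] [NormedAddCommGroup G₂] [InnerProductSpace 𝕜 G₂]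

noncomputable def blockOp (A : E₁ →L[𝕜] F₁) (B : E₂ →L[𝕜] F₁) (C : E₁ →L[𝕜] F₂)
    (D : E₂ →L[𝕜] F₂) : WithLp 2 (E₁ × E₂) →L[𝕜] WithLp 2 (F₁ × F₂) :=
  (prodContinuousLinearEquiv 2 𝕜 F₁ F₂).symm.toContinuousLinearMap ∘L
    (A.coprod B).prod (C.coprod D) ∘L (prodContinuousLinearEquiv 2 𝕜 E₁ E₂).toContinuousLinearMap

variable (A : E₁ →L[𝕜] F₁) (B : E₂ →L[𝕜] F₁) (C : E₁ →L[𝕜] F₂) (D : E₂ →L[𝕜] F₂)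

@[simp]
theorem blockOp_apply (x : WithLp 2 (E₁ × E₂)) :
    blockOp A B C D x = toLp 2 (A x.fst + B x.snd, C x.fst + D x.snd) :=
  rfl

theorem blockOp_comp_blockOp (A' : F₁ →L[𝕜] G₁) (B' : F₂ →L[𝕜] G₁) (C' : F₁ →L[𝕜] G₂)
    (D' : F₂ →L[𝕜] G₂) :
    blockOp A' B' C' D' ∘L blockOp A B C D =
      blockOp (A' ∘L A + B' ∘L C) (A' ∘L B + B' ∘L D) (C' ∘L A + D' ∘L C)
        (C' ∘L B + D' ∘L D) := by
  ext x : 1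
  simp only [comp_apply, blockOp_apply, toLp_fst, toLp_snd, add_apply, map_add]
  congr 1
  ext <;> dsimp only <;> abel

theorem blockOp_one : blockOp (1 : E₁ →L[𝕜] E₁) 0 0 (1 : E₂ →L[𝕜] E₂) = 1 := by
  ext x : 1
  simp only [blockOp_apply, one_apply_eq_self, zero_apply, add_zero, zero_add]
  rfl

theorem adjoint_blockOp [CompleteSpace E₁] [CompleteSpace E₂] [CompleteSpace F₁]
    [CompleteSpace F₂] :
    adjoint (blockOp A B C D) = blockOp (adjoint A) (adjoint C) (adjoint B) (adjoint D) := by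
  refine ((eq_adjoint_iff _ _).mpr fun x y => ?_).symm
  simp only [prod_inner_apply, ofLp_fst, ofLp_snd, blockOp_apply,
    inner_add_left, inner_add_right, adjoint_inner_left]
  abel

end BlockOp

namespace lp

variable {ι 𝕜 : Type*} [RCLike 𝕜] [DecidableEq ι]

theorem ext_single_one {p : ENNReal} [Fact (1 ≤ p)] (hp : p ≠ ⊤) {F : Type*} [AddCommMonoid F]
    [Module 𝕜 F] [TopologicalSpace F] [T2Space F] {f g : lp (fun _ : ι => 𝕜) p →L[𝕜] F}
    (h : ∀ i, f (lp.single p i 1) = g (lp.single p i 1)) : f = g :=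
  lp.ext_continuousLinearMap hp fun i => ContinuousLinearMap.ext_ring (h i)

theorem adjoint_apply_apply {E : Type*} [NormedAddCommGroup E] [InnerProductSpace 𝕜 E]
    [CompleteSpace E] (T : lp (fun _ : ι => 𝕜) 2 →L[𝕜] E) (y : E) (i : ι) :
    adjoint T y i = ⟪T (lp.single 2 i 1), y⟫_𝕜 := by
  rw [← adjoint_inner_right, lp.inner_single_left]
  simp

end lp

theorem eNZ_apply (n : ℕ) (k : ℤ) (m : ℕ) (j : ℤ) :
    eNZ n k (m, j) = if m = n ∧ j = k then 1 else 0 := by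
  simp [eNZ, lp.single_apply, Pi.single_apply]

theorem inner_eNZ_eNZ (m n : ℕ) (j k : ℤ) :
    ⟪eNZ m j, eNZ n k⟫_ℂ = if m = n ∧ j = k then 1 else 0 := by
  rw [eNZ, lp.inner_single_left, eNZ_apply]
  simp

theorem ext_eNZ {S T : l2NZ →L[ℂ] l2NZ} (h : ∀ n k, S (eNZ n k) = T (eNZ n k)) : S = T :=
  lp.ext_single_one ENNReal.ofNat_ne_top fun p => h p.1 p.2

theorem ofReal_sqrt_one_sub_pow_mul_self {t : ℝ} (ht : |t| ≤ 1) (m : ℕ) :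
    (Real.sqrt (1 - t ^ (2 * m)) : ℂ) * (Real.sqrt (1 - t ^ (2 * m)) : ℂ) =
      1 - (t : ℂ) ^ (2 * m) := by
  have hpow : t ^ (2 * m) ≤ 1 := by
    rw [pow_mul]
    exact pow_le_one₀ (sq_nonneg t) ((sq_le_one_iff_abs_le_one t).mpr ht)
  rw [← Complex.ofReal_mul, Real.mul_self_sqrt (sub_nonneg.mpr hpow)]
  push_cast
  rfl

namespace IsAlphaGamma

variable {t : ℝ} {α γ : l2NZ →L[ℂ] l2NZ} (h : IsAlphaGamma t α γ)
include h

theorem adjoint_gamma_apply_eNZ (n : ℕ) (k : ℤ) :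
    adjoint γ (eNZ n k) = ((t ^ n : ℝ) : ℂ) • eNZ n (k + 1) := by
  ext ⟨m, j⟩
  rw [lp.adjoint_apply_apply, show lp.single 2 (m, j) (1 : ℂ) = eNZ m j from rfl, h.2.2,
    lp.coeFn_smul, Pi.smul_apply, inner_smul_left, inner_eNZ_eNZ, eNZ_apply]
  simp only [Complex.conj_ofReal, smul_eq_mul, show j - 1 = k ↔ j = k + 1 by omega]
  rcases eq_or_ne m n with rfl | hmn
  · rfl
  · simp [hmn]

theorem adjoint_alpha_apply_eNZ (n : ℕ) (k : ℤ) :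
    adjoint α (eNZ n k) = (Real.sqrt (1 - t ^ (2 * (n + 1))) : ℂ) • eNZ (n + 1) (k + 1) := by
  ext ⟨m, j⟩
  rw [lp.adjoint_apply_apply, show lp.single 2 (m, j) (1 : ℂ) = eNZ m j from rfl,
    lp.coeFn_smul, Pi.smul_apply, eNZ_apply]
  rcases m with _ | m
  · simp [h.2.1]
  · rw [h.1, inner_smul_left, inner_eNZ_eNZ]
    simp only [Complex.conj_ofReal, smul_eq_mul, add_left_inj,
      show j - 1 = k ↔ j = k + 1 by omega]
    rcases eq_or_ne m n with rfl | hmn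
    · rfl
    · simp [hmn]

theorem adjoint_alpha_mul_alpha_add_adjoint_gamma_mul_gamma (ht : |t| ≤ 1) :
    adjoint α * α + adjoint γ * γ = 1 := by
  refine ext_eNZ fun n k => ?_
  rcases n with _ | n
  · simp only [add_apply, mul_apply_eq_comp, h.2.1, h.2.2, adjoint_gamma_apply_eNZ h, map_smul,
      map_zero, smul_smul, zero_add, sub_add_cancel, one_apply_eq_self]
    convert one_smul ℂ (eNZ 0 k) using 2
    simp
  · simp only [add_apply, mul_apply_eq_comp, one_apply_eq_self, h.1, h.2.2,
      adjoint_gamma_apply_eNZ h, adjoint_alpha_apply_eNZ h, map_smul, smul_smul, ← add_smul,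
      sub_add_cancel, ofReal_sqrt_one_sub_pow_mul_self ht]
    convert one_smul ℂ (eNZ (n + 1) k) using 2
    push_cast
    ring

theorem alpha_mul_adjoint_alpha_add_sq_smul_adjoint_gamma_mul_gamma (ht : |t| ≤ 1) :
    α * adjoint α + ((t : ℂ) ^ 2) • (adjoint γ * γ) = 1 := by
  refine ext_eNZ fun n k => ?_
  simp only [add_apply, mul_apply_eq_comp, smul_apply, one_apply_eq_self, h.1, h.2.2,
    adjoint_gamma_apply_eNZ h, adjoint_alpha_apply_eNZ h, map_smul, smul_smul, ← add_smul,
    add_sub_cancel_right, sub_add_cancel, ofReal_sqrt_one_sub_pow_mul_self ht]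
  convert one_smul ℂ (eNZ n k) using 2
  push_cast
  ring

theorem adjoint_gamma_mul_gamma : adjoint γ * γ = γ * adjoint γ :=
  ext_eNZ fun n k => by simp [h.2.2, adjoint_gamma_apply_eNZ h, smul_smul]

theorem alpha_mul_gamma : α * γ = (t : ℂ) • (γ * α) := by
  refine ext_eNZ fun n k => ?_
  rcases n with _ | n
  · simp only [mul_apply_eq_comp, smul_apply, h.2.1, h.2.2, map_smul, map_zero, smul_zero]
  · simp only [mul_apply_eq_comp, smul_apply, h.1, h.2.2, map_smul, smul_smul]
    congr 1
    push_cast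
    ring

theorem alpha_mul_adjoint_gamma : α * adjoint γ = (t : ℂ) • (adjoint γ * α) := by
  refine ext_eNZ fun n k => ?_
  rcases n with _ | n
  · simp only [mul_apply_eq_comp, smul_apply, h.2.1, adjoint_gamma_apply_eNZ h, map_smul,
      map_zero, smul_zero]
  · simp only [mul_apply_eq_comp, smul_apply, h.1, adjoint_gamma_apply_eNZ h, map_smul, smul_smul,
      add_sub_cancel_right, sub_add_cancel]
    congr 1
    push_cast
    ring

theorem gamma_mul_adjoint_alpha : γ * adjoint α = (t : ℂ) • (adjoint α * γ) := by
  have := congrArg star h.alpha_mul_adjoint_gamma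
  rw [star_mul, star_smul, star_mul, Complex.star_def, Complex.conj_ofReal] at this
  simpa only [star_eq_adjoint, adjoint_adjoint] using this

theorem adjoint_gamma_mul_adjoint_alpha :
    adjoint γ * adjoint α = (t : ℂ) • (adjoint α * adjoint γ) := by
  have := congrArg star h.alpha_mul_gamma
  rw [star_mul, star_smul, star_mul, Complex.star_def, Complex.conj_ofReal] at this
  simpa only [star_eq_adjoint] using this

end IsAlphaGamma

open ContinuousLinearMap in
/-- **Statement 9.** For every `t ∈ [0,1)`, the 2×2 operator matrix
`U_t = [[α_t, −t γ_t*], [γ_t, α_t*]]` is a unitary operator on `ℓ²(ℕ×ℤ) ⊕ ℓ²(ℕ×ℤ)`. -/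
theorem Ut_unitary (t : ℝ) (ht0 : 0 ≤ t) (ht1 : t < 1)
    (α γ : l2NZ →L[ℂ] l2NZ) (h : IsAlphaGamma t α γ)
    (U : H2 →L[ℂ] H2)
    (hU : ∀ x y : l2NZ, U (pairH2 x y) =
      pairH2 (α x - (t : ℂ) • adjoint γ y) (γ x + adjoint α y)) :
    adjoint U * U = 1 ∧ U * adjoint U = 1 := by
  have ht : |t| ≤ 1 := abs_le.mpr ⟨by linarith, ht1.le⟩
  have hU_eq : U = blockOp α (-(t : ℂ) • adjoint γ) γ (adjoint α) := by
    ext1 z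
    exact (hU z.fst z.snd).trans (by rw [sub_eq_add_neg, ← neg_smul]; rfl)
  have hU_adj : adjoint U = blockOp (adjoint α) (adjoint γ) (-(t : ℂ) • γ) α := by
    rw [hU_eq, adjoint_blockOp, map_smulₛₗ, map_neg, Complex.conj_ofReal, adjoint_adjoint,
      adjoint_adjoint]
  constructor
  · rw [hU_adj, hU_eq, mul_def, blockOp_comp_blockOp, ← blockOp_one]
    simp only [← mul_def, neg_smul, smul_mul_assoc, mul_smul_comm, neg_mul, mul_neg, smul_neg,
      neg_neg, smul_smul, ← sq]
    congr 1
    · exact h.adjoint_alpha_mul_alpha_add_adjoint_gamma_mul_gamma ht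
    · rw [h.adjoint_gamma_mul_adjoint_alpha, neg_add_cancel]
    · rw [h.alpha_mul_gamma, neg_add_cancel]
    · rw [← h.adjoint_gamma_mul_gamma, add_comm]
      exact h.alpha_mul_adjoint_alpha_add_sq_smul_adjoint_gamma_mul_gamma ht
  · rw [hU_adj, hU_eq, mul_def, blockOp_comp_blockOp, ← blockOp_one]
    simp only [← mul_def, neg_smul, smul_mul_assoc, mul_smul_comm, neg_mul, mul_neg, smul_neg,
      neg_neg, smul_smul, ← sq]
    congr 1
    · exact h.alpha_mul_adjoint_alpha_add_sq_smul_adjoint_gamma_mul_gamma ht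
    · rw [h.alpha_mul_adjoint_gamma, add_neg_cancel]
    · rw [h.gamma_mul_adjoint_alpha, add_neg_cancel]
    · rw [← h.adjoint_gamma_mul_gamma, add_comm]
      exact h.adjoint_alpha_mul_alpha_add_adjoint_gamma_mul_gamma ht
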